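/- arXiv:1007.1802 — 5 statements merged into one kernel-verified Lean document; each statement's English description precedes it below -/
import Mathlib

section
/- For every finite set S of at most k labels, there exists a label L such that L' ≺_b L for every L' ∈ S (the function Next_b produces a label greater than all given labels). -/
/-- A label over `X = Fin (k² + 1)`: a pair `(s, A)` where `s` is the sting
and `A` is a `k`-element set of antistings. -/
def Label (k : ℕ) := {p : Fin (k ^ 2 + 1) × Finset (Fin (k ^ 2 + 1)) // p.2.card = k}

/-- The comparison predicate `≺_b` on labels: `(s, A) ≺_b (s', A') ↔ s ∈ A' ∧ s' ∉ A`. -/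
def precb {k : ℕ} (L L' : Label k) : Prop :=
  L.1.1 ∈ L'.1.2 ∧ L'.1.1 ∉ L.1.2

/-- for every set of at most `k` labels there exists a label
greater (under `≺_b`) than all of them (correctness of `Next_b`). -/
theorem exists_next_label {k : ℕ} (hk : 1 < k) (S : Finset (Label k))
    (hS : S.card ≤ k) :
    ∃ L : Label k, ∀ L' ∈ S, precb L' L := by
  classical
  -- set of stings of labels in S
  set T : Finset (Fin (k ^ 2 + 1)) := S.image (fun L => L.1.1) with hT
  have hTcard : T.card ≤ k := le_trans (Finset.card_image_le) hS
  -- extend T to a k-element set A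
  have hcard : k ≤ Fintype.card (Fin (k ^ 2 + 1)) := by
    simp only [Fintype.card_fin]
    nlinarith
  obtain ⟨A, hTA, hAcard⟩ := Finset.exists_superset_card_eq hTcard hcard
  -- union of antistings
  set U : Finset (Fin (k ^ 2 + 1)) := S.biUnion (fun L => L.1.2) with hU
  have hUcard : U.card ≤ k * k := by
    calc U.card ≤ ∑ L ∈ S, L.1.2.card := Finset.card_biUnion_le
    _ ≤ ∑ _L ∈ S, k := by
        apply Finset.sum_le_sum
        intro L _
        exact le_of_eq L.2
    _ = S.card * k := by rw [Finset.sum_const, smul_eq_mul]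
    _ ≤ k * k := Nat.mul_le_mul_right k hS
  have hUlt : U.card < Fintype.card (Fin (k ^ 2 + 1)) := by
    simp only [Fintype.card_fin]
    calc U.card ≤ k * k := hUcard
    _ < k ^ 2 + 1 := by nlinarith
  have hne : Uᶜ.Nonempty := by
    rw [← Finset.card_pos, Finset.card_compl]
    omega
  obtain ⟨s, hs'⟩ := hne
  have hs : s ∉ U := Finset.mem_compl.mp hs'
  refine ⟨⟨(s, A), hAcard⟩, fun L' hL' => ⟨?_, ?_⟩⟩
  · exact hTA (Finset.mem_image_of_mem _ hL')
  · intro hmem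
    exact hs (Finset.mem_biUnion.mpr ⟨L', hL', hmem⟩)
end

section
/- For every finite set S of at most k timestamps, there exists a timestamp t such that t' ≺_e t for every t' ∈ S; in fact one may take t = (L, 0) where L is any label satisfying l' ≺_b L for every label l' appearing as the first component of a timestamp in S. -/
/-- A timestamp: a pair of a label (the epoch) and a natural number (sequence number). -/
def Timestamp (k : ℕ) := Label k × ℕ

/-- The comparison predicate `≺_e` on timestamps:
`(x, i) ≺_e (y, j) ↔ x ≺_b y ∨ (x = y ∧ i < j)`. -/
def prece {k : ℕ} (t t' : Timestamp k) : Prop :=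
  precb t.1 t'.1 ∨ (t.1 = t'.1 ∧ t.2 < t'.2)

/-- for every set `S` of at most `k` timestamps there is a
timestamp dominating all of them under `≺_e`; in fact `(L, 0)` works for any
label `L` with `l' ≺_b L` for every label `l'` appearing in `S`. -/
theorem exists_next_timestamp {k : ℕ} (hk : 1 < k) (S : Finset (Timestamp k))
    (hS : S.card ≤ k) :
    (∃ t : Timestamp k, ∀ t' ∈ S, prece t' t) ∧
      (∀ L : Label k, (∀ t' ∈ S, precb t'.1 L) →
        ∀ t' ∈ S, prece t' ((L, 0) : Timestamp k)) := by
  have h2 : ∀ L : Label k, (∀ t' ∈ S, precb t'.1 L) →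
      ∀ t' ∈ S, prece t' ((L, 0) : Timestamp k) := by
    intro L hL t' ht'
    exact Or.inl (hL t' ht')
  refine ⟨?_, h2⟩
  -- stings appearing in S
  set T : Finset (Fin (k ^ 2 + 1)) := S.image (fun t => t.1.1.1) with hTdef
  have hT : T.card ≤ k := le_trans Finset.card_image_le hS
  obtain ⟨A, hTA, hA⟩ := Finset.exists_superset_card_eq hT
    (by simp only [Fintype.card_fin]; nlinarith)
  -- union of antistings
  set U : Finset (Fin (k ^ 2 + 1)) := S.biUnion (fun t => t.1.1.2) with hUdef
  have hU : U.card ≤ k * k := by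
    calc U.card ≤ ∑ t ∈ S, t.1.1.2.card := Finset.card_biUnion_le
    _ = ∑ t ∈ S, k := by
        refine Finset.sum_congr rfl ?_
        intro t _
        exact t.1.2
    _ = S.card * k := by rw [Finset.sum_const, smul_eq_mul]
    _ ≤ k * k := Nat.mul_le_mul_right k hS
  have hUlt : U.card < Fintype.card (Fin (k ^ 2 + 1)) := by
    simp only [Fintype.card_fin]
    nlinarith
  have hcompl : (Uᶜ : Finset (Fin (k ^ 2 + 1))).Nonempty := by
    rw [← Finset.card_pos, Finset.card_compl]
    omega
  obtain ⟨s, hs⟩ := hcompl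
  rw [Finset.mem_compl] at hs
  refine ⟨((⟨(s, A), hA⟩ : Label k), 0), ?_⟩
  apply h2
  intro t' ht'
  constructor
  · exact hTA (Finset.mem_image.mpr ⟨t', ht', rfl⟩)
  · intro hmem
    exact hs (Finset.mem_biUnion.mpr ⟨t', ht', hmem⟩)
end

section
/- In the guessing game, if the hider survives the first m rounds, then its m responses H_1, …, H_m are pairwise distinct elements of ℋ₀: suppose that for every round i with 1 ≤ i ≤ m we have (a) L_j ≺_b L_i and H_j ≺_b L_i for every 1 ≤ j < i, (b) H_i ∈ ℋ₀ ∪ {L_1, …, L_{i-1}}, and (c) ¬(H_i ≺_b L_i). Then H_1, …, H_m are m pairwise distinct labels, all belonging to ℋ₀. -/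
/-- if the hider survives the first `m` rounds of the guessing
game, then its responses `H 1, …, H m` are pairwise distinct elements of the
hider's initial set `H₀`. -/
theorem hider_responses_distinct {k : ℕ} (hk : 1 < k) (m : ℕ) (hm : 1 ≤ m)
    (L H : ℕ → Label k) (H₀ : Finset (Label k))
    (ha : ∀ i, 1 ≤ i → i ≤ m → ∀ j, 1 ≤ j → j < i →
      precb (L j) (L i) ∧ precb (H j) (L i))
    (hb : ∀ i, 1 ≤ i → i ≤ m → H i ∈ H₀ ∨ ∃ j, 1 ≤ j ∧ j < i ∧ H i = L j)
    (hc : ∀ i, 1 ≤ i → i ≤ m → ¬ precb (H i) (L i)) :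
    (∀ i, 1 ≤ i → i ≤ m → H i ∈ H₀) ∧
      (∀ i j, 1 ≤ i → i < j → j ≤ m → H i ≠ H j) := by
  constructor
  · intro i hi1 him
    rcases hb i hi1 him with h | ⟨j, hj1, hji, hEq⟩
    · exact h
    · exfalso
      exact hc i hi1 him (hEq ▸ (ha i hi1 him j hj1 hji).1)
  · intro i j hi1 hij hjm hEq
    exact hc j (le_trans hi1 hij.le) hjm
      (hEq ▸ (ha j (le_trans hi1 hij.le) hjm i hi1 hij).2)
end

section
/- All the labels of the hider are smaller than one of the first m+1 labels chosen by the finder: let ℋ₀, ℋ₁, ℋ₂, … be finite sets of labels with |ℋ_i| ≤ m and ℋ_i ⊆ ℋ_{i-1} ∪ {L_i} for every i ≥ 1, and suppose that for every round i with 1 ≤ i ≤ m+1 the finder's label L_i satisfies L_j ≺_b L_i and H_j ≺_b L_i for every 1 ≤ j < i. If for every i with 1 ≤ i ≤ m there is a valid response H_i ∈ ℋ_{i-1} with ¬(H_i ≺_b L_i), then in round m+1 the hider has no valid response: every x ∈ ℋ_m satisfies x ≺_b L_{m+1}. -/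
instance {k : ℕ} : DecidableEq (Label k) :=
  inferInstanceAs (DecidableEq {p : Fin (k ^ 2 + 1) × Finset (Fin (k ^ 2 + 1)) // p.2.card = k})

/-- all the labels of the hider are smaller than one of the
first `m + 1` labels chosen by the finder.  `ℋ i` is the hider's set after
round `i` (of size at most `m`, gaining only finder's labels), `L` the
finder's labels and `H` the hider's responses. -/
theorem finder_wins {k : ℕ} (hk : 1 < k) (m : ℕ) (hm : 1 ≤ m)
    (L H : ℕ → Label k) (ℋ : ℕ → Finset (Label k))
    (hsize : ∀ i, (ℋ i).card ≤ m)
    (hevolve : ∀ i, 1 ≤ i → ℋ i ⊆ ℋ (i - 1) ∪ {L i})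
    (ha : ∀ i, 1 ≤ i → i ≤ m + 1 → ∀ j, 1 ≤ j → j < i →
      precb (L j) (L i) ∧ precb (H j) (L i))
    (hresp : ∀ i, 1 ≤ i → i ≤ m → H i ∈ ℋ (i - 1) ∧ ¬ precb (H i) (L i)) :
    ∀ x ∈ ℋ m, precb x (L (m + 1)) := by
  intro x hx
  by_contra hbad
  -- any element of ℋ i is in ℋ 0 or equal to some L j, 1 ≤ j ≤ i
  have chain : ∀ i, ∀ y ∈ ℋ i, y ∈ ℋ 0 ∨ ∃ j, 1 ≤ j ∧ j ≤ i ∧ y = L j := by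
    intro i
    induction i with
    | zero => intro y hy; exact Or.inl hy
    | succ n ih =>
      intro y hy
      have h := hevolve (n + 1) (by omega) hy
      simp only [Nat.add_sub_cancel] at h
      rcases Finset.mem_union.mp h with h | h
      · rcases ih y h with h0 | ⟨j, h1, h2, h3⟩
        · exact Or.inl h0
        · exact Or.inr ⟨j, h1, by omega, h3⟩
      · exact Or.inr ⟨n + 1, by omega, le_refl _, Finset.mem_singleton.mp h⟩
  -- each H i (1 ≤ i ≤ m) lies in ℋ 0
  have hH0 : ∀ i, 1 ≤ i → i ≤ m → H i ∈ ℋ 0 := by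
    intro i h1 h2
    rcases chain (i - 1) (H i) (hresp i h1 h2).1 with h | ⟨j, hj1, hj2, hj3⟩
    · exact h
    · exfalso
      have hji : j < i := by omega
      have := (ha i h1 (by omega) j hj1 hji).2
      exact (hresp i h1 h2).2 (by rw [hj3]; exact (ha i h1 (by omega) j hj1 hji).1)
  -- the H i are pairwise distinct on [1, m]
  have hHne : ∀ a b, 1 ≤ a → a < b → b ≤ m → H a ≠ H b := by
    intro a b ha1 hab hbm heq
    have h1 := (ha b (by omega) (by omega) a ha1 hab).2
    rw [heq] at h1
    exact (hresp b (by omega) hbm).2 h1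
  -- x is in ℋ 0
  have hx0 : x ∈ ℋ 0 := by
    rcases chain m x hx with h | ⟨j, hj1, hj2, hj3⟩
    · exact h
    · exfalso
      exact hbad (hj3 ▸ (ha (m + 1) (by omega) (le_refl _) j hj1 (by omega)).1)
  -- x differs from each H i
  have hxH : ∀ i, 1 ≤ i → i ≤ m → x ≠ H i := by
    intro i h1 h2 heq
    exact hbad (heq ▸ (ha (m + 1) (by omega) (le_refl _) i h1 (by omega)).2)
  -- counting
  classical
  set S := (Finset.Icc 1 m).image H with hS
  have hinj : Set.InjOn H (Finset.Icc 1 m) := by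
    intro a haI b hbI heq
    simp only [Finset.coe_Icc, Set.mem_Icc] at haI hbI
    rcases lt_trichotomy a b with h | h | h
    · exact absurd heq (hHne a b haI.1 h hbI.2)
    · exact h
    · exact absurd heq.symm (hHne b a hbI.1 h haI.2)
  have hcardS : S.card = m := by
    rw [hS, Finset.card_image_of_injOn hinj, Nat.card_Icc]; omega
  have hxS : x ∉ S := by
    intro hmem
    rcases Finset.mem_image.mp hmem with ⟨i, hi, hix⟩
    simp only [Finset.mem_Icc] at hi
    exact hxH i hi.1 hi.2 hix.symm
  have hsub : insert x S ⊆ ℋ 0 := by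
    intro y hy
    rcases Finset.mem_insert.mp hy with h | h
    · exact h ▸ hx0
    · rcases Finset.mem_image.mp h with ⟨i, hi, hiy⟩
      simp only [Finset.mem_Icc] at hi
      exact hiy ▸ hH0 i hi.1 hi.2
  have := Finset.card_le_card hsub
  rw [Finset.card_insert_of_notMem hxS, hcardS] at this
  have := hsize 0
  omega
end

section
/- For every finite set T of at most k elements of X there exists a subset A of X with exactly k elements containing T, and for every finite family of at most k subsets of X each of size k there exists s ∈ X outside their union; consequently, for every finite set S of at most k labels the pair (s, A) — with A any k-element superset of the stings of S and s any element outside the union of the antisting sets of S — is a label dominating every element of S under ≺_b. -/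
/-- (1) every set of at most `k` elements of `X` extends to an
exactly-`k`-element subset of `X`; (2) for at most `k` subsets of `X` of size
`k` there is an element of `X` outside their union; (3) consequently, for a set
`S` of at most `k` labels, any such pair `(s, A)` — with `A` a `k`-element
superset of the stings of `S` and `s` outside all antisting sets of `S` — is a
label dominating every element of `S` under `≺_b`. -/
theorem next_b_construction {k : ℕ} (hk : 1 < k) :
    (∀ T : Finset (Fin (k ^ 2 + 1)), T.card ≤ k →
      ∃ A : Finset (Fin (k ^ 2 + 1)), T ⊆ A ∧ A.card = k) ∧
    (∀ j : ℕ, j ≤ k → ∀ 𝒜 : Fin j → Finset (Fin (k ^ 2 + 1)),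
      (∀ i, (𝒜 i).card = k) → ∃ s : Fin (k ^ 2 + 1), ∀ i, s ∉ 𝒜 i) ∧
    (∀ S : Finset (Label k), S.card ≤ k →
      ∀ (A : Finset (Fin (k ^ 2 + 1))) (hA : A.card = k),
        (∀ L ∈ S, L.1.1 ∈ A) →
        ∀ s : Fin (k ^ 2 + 1), (∀ L ∈ S, s ∉ L.1.2) →
          ∀ L ∈ S, precb L (⟨(s, A), hA⟩ : Label k)) := by
  refine ⟨?_, ?_, ?_⟩
  · intro T hT
    obtain ⟨A, hTA, hA⟩ := Finset.exists_superset_card_eq hT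
      (by simp [Fintype.card_fin]; nlinarith)
    exact ⟨A, hTA, hA⟩
  · intro j hj 𝒜 h𝒜
    have hcard : (Finset.univ.biUnion fun i : Fin j => 𝒜 i).card < k ^ 2 + 1 := by
      calc (Finset.univ.biUnion fun i : Fin j => 𝒜 i).card
          ≤ ∑ i : Fin j, (𝒜 i).card := Finset.card_biUnion_le
        _ = j * k := by simp [h𝒜, Finset.sum_const]
        _ ≤ k * k := Nat.mul_le_mul_right k hj
        _ < k ^ 2 + 1 := by nlinarith
    have hne : ((Finset.univ.biUnion fun i : Fin j => 𝒜 i)ᶜ).Nonempty := by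
      rw [← Finset.card_pos, Finset.card_compl, Fintype.card_fin]
      omega
    obtain ⟨s, hs⟩ := hne
    rw [Finset.mem_compl] at hs
    exact ⟨s, fun i h => hs (Finset.mem_biUnion.mpr ⟨i, Finset.mem_univ i, h⟩)⟩
  · intro S hS A hA hst s hs L hL
    exact ⟨hst L hL, hs L hL⟩
end
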